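/- Let x ∈ 𝐊 and let Y be an almost front of some B ∈ ℬ_x. Then D^x_Y is a proper filter on Y: Y ∈ D^x_Y, ∅ ∉ D^x_Y, D^x_Y is closed under intersections of two members, and if Z₁ ∈ D^x_Y and Z₁ ⊆ Z₂ ⊆ Y then Z₂ ∈ D^x_Y. -/

import Mathlib

open Set Cardinal

universe u

variable {α : Type u}

section OrderDefs

variable [PartialOrder α]

/-- `η` and `ν` are compatible in `M`: they have a common `≤`-upper bound in `M`. -/
def Compat (M : Set α) (η ν : α) : Prop :=
  ∃ ρ ∈ M, η ≤ ρ ∧ ν ≤ ρ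

/-- The set of immediate successors of `ν` inside `B`. -/
def succIn (B : Set α) (ν : α) : Set α :=
  {ρ ∈ B | ν < ρ ∧ ¬∃ σ ∈ B, ν < σ ∧ σ < ρ}

/-- The set of maximal elements of `B`. -/
def maxIn (B : Set α) : Set α :=
  {η ∈ B | ∀ ν ∈ B, ¬η < ν}

/-- `r` is the root (least element) of `B`. -/
def IsRoot (B : Set α) (r : α) : Prop :=
  r ∈ B ∧ ∀ x ∈ B, r ≤ x

/-- `B` is a countable well-founded subtree of `M`. -/
def CWT (M B : Set α) : Prop :=
  B ⊆ M ∧ B.Countable ∧ (∃ r, IsRoot B r) ∧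
  (∀ ν ∈ B, ∀ η ∈ B, ∀ ρ ∈ B, η ≤ ν → ρ ≤ ν → η ≤ ρ ∨ ρ ≤ η) ∧
  (∀ C, C ⊆ B → IsChain (· ≤ ·) C → C.Finite) ∧
  (∀ ν ∈ B, succIn B ν = ∅ ∨ (succIn B ν).Infinite) ∧
  (∀ η ∈ B, ∀ ν ∈ B, ¬η ≤ ν → ¬ν ≤ η → ¬Compat M η ν) ∧
  (∀ ν ∈ B \ maxIn B, ∀ F : Finset α, (F : Set α) ⊆ M \ {ρ | ρ ≤ ν} →
    {ϱ ∈ succIn B ν | ∀ ρ ∈ F, ¬Compat M ρ ϱ}.Infinite)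

/-- `Y` is a front of `B`: a maximal set of pairwise incomparable members of `B`. -/
def IsFront (B Y : Set α) : Prop :=
  Y ⊆ B ∧ (∀ η ∈ Y, ∀ ν ∈ Y, η ≠ ν → ¬η ≤ ν) ∧
  (∀ ν ∈ B, ∃ η ∈ Y, η ≤ ν ∨ ν ≤ η)

/-- `B'` is an exhaustive subtree of `B`. -/
def sb (M B B' : Set α) : Prop :=
  CWT M B' ∧ B' ⊆ B ∧ (∃ r, IsRoot B r ∧ IsRoot B' r) ∧
  ∀ ν ∈ B', succIn B' ν ⊆ succIn B ν ∧ (succIn B ν \ succIn B' ν).Finite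

/-- `B'` is a positive subtree of `B`. -/
def psb (M B B' : Set α) : Prop :=
  CWT M B' ∧ B' ⊆ B ∧ (∃ r, IsRoot B r ∧ IsRoot B' r) ∧
  ∀ ν ∈ B' \ maxIn B, (succIn B' ν).Infinite ∧ succIn B' ν ⊆ succIn B ν

/-- `Y` is an almost front of `B`: an antichain of `M` whose intersection with some
exhaustive subtree `B'` of `B` is a front of `B'`. -/
def IsAlmostFront (M B Y : Set α) : Prop :=
  Y ⊆ M ∧ (∀ η ∈ Y, ∀ ν ∈ Y, η ≠ ν → ¬η ≤ ν) ∧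
  ∃ B', sb M B B' ∧ IsFront B' (Y ∩ B')

/-- The relation `B₁ ≤*_M B₂`. -/
def leStar (M B₁ B₂ : Set α) : Prop :=
  CWT M B₁ ∧ CWT M B₂ ∧ (∃ r, IsRoot B₁ r ∧ IsRoot B₂ r) ∧
  ∃ B₂', sb M B₂ B₂' ∧ psb M B₁ (B₂' ∩ B₁) ∧
    ∀ Y, IsAlmostFront M (B₂' ∩ B₁) Y → IsAlmostFront M B₂ Y

end OrderDefs

section KDefs

variable (α) [PartialOrder α]

/-- A member of the class `𝐊`: a system of approximations to a system of ultrafilters. -/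
structure KSys where
  /-- the underlying set of the partial order `M_x` (the order is inherited from `α`) -/
  M : Set α
  /-- the root, i.e. the least element, of `M_x` -/
  rt : α
  rt_mem : rt ∈ M
  rt_least : ∀ a ∈ M, rt ≤ a
  /-- the system `⟨𝒜^x_η : η ∈ M_x⟩` -/
  A : α → Set (Set α)
  A_empty : ∀ η, η ∉ M → A η = ∅
  A_cwt : ∀ η ∈ M, ∀ B ∈ A η, CWT M B
  A_root : ∀ η ∈ M, ∀ B ∈ A η, IsRoot B η
  A_singleton : ∀ η ∈ M, {η} ∈ A η
  /-- the partial order `≤_x` on `ℬ_x = 𝒜^x_{rt} \ {{rt}}` -/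
  lex : Set α → Set α → Prop
  lex_mem : ∀ B₁ B₂, lex B₁ B₂ →
    B₁ ∈ A rt \ {({rt} : Set α)} ∧ B₂ ∈ A rt \ {({rt} : Set α)}
  lex_refl : ∀ B ∈ A rt \ {({rt} : Set α)}, lex B B
  lex_trans : ∀ B₁ B₂ B₃, lex B₁ B₂ → lex B₂ B₃ → lex B₁ B₃
  lex_antisymm : ∀ B₁ B₂, lex B₁ B₂ → lex B₂ B₁ → B₁ = B₂
  lex_directed : ∀ B₁ ∈ A rt \ {({rt} : Set α)}, ∀ B₂ ∈ A rt \ {({rt} : Set α)},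
    ∃ B₃ ∈ A rt \ {({rt} : Set α)}, lex B₁ B₃ ∧ lex B₂ B₃
  lex_leStar : ∀ B₁ B₂, lex B₁ B₂ → leStar M B₁ B₂
  A_restrict : ∀ η ∈ M, ∀ B ∈ A η, ∀ ν ∈ B, B ∩ {ρ | ν ≤ ρ} ∈ A ν

variable {α}

namespace KSys

/-- `ℬ_x = 𝒜^x_{rt_x} \ {{rt_x}}`. -/
def Bf (x : KSys α) : Set (Set α) :=
  x.A x.rt \ {({x.rt} : Set α)}

/-- The filter `D^x_Y` on an almost front `Y`. -/
def D (x : KSys α) (Y : Set α) : Set (Set α) :=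
  {Z | Z ⊆ Y ∧ ∃ B ∈ x.Bf, ∃ B', sb x.M B B' ∧ IsAlmostFront x.M B Y ∧ B' ∩ Y ⊆ Z}

/-- The ideal `id_x(ν,B)` on `suc_B(ν)`. -/
def idl (x : KSys α) (ν : α) (B : Set α) : Set (Set α) :=
  {C | C ⊆ succIn B ν ∧ ∃ F : Finset α, (F : Set α) ⊆ x.M \ {ρ | ν ≤ ρ} ∧
    ∀ ϱ ∈ C, ∃ ρ ∈ F, Compat x.M ϱ ρ}

/-- `‖x‖ = |M_x| + Σ {|𝒜^x_η| : η ∈ M_x}`. -/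
noncomputable def norm (x : KSys α) : Cardinal.{u} :=
  Cardinal.mk ↥x.M + Cardinal.sum fun η : ↥x.M => Cardinal.mk ↥(x.A ↑η)

end KSys

/-- The relation `x ≤_𝐊 y`. -/
def KLE (x y : KSys α) : Prop :=
  x.M ⊆ y.M ∧
  (∀ η ∈ x.M, ∀ ν ∈ x.M, (Compat x.M η ν ↔ Compat y.M η ν)) ∧
  (∀ η ∈ x.M, x.A η ⊆ y.A η) ∧
  y.rt = x.rt ∧
  (∀ B₁ ∈ x.Bf, ∀ B₂ ∈ x.Bf, (x.lex B₁ B₂ ↔ y.lex B₁ B₂))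

end KDefs

/-!
Upward closure is immediate, and `Y ∈ D_Y` is witnessed by `B` itself. Exhaustive subtrees are
closed downwards, hence stable under intersection and under restriction to downward-closed
subtrees. The key point is that a front `Y ∩ D` of an exhaustive subtree `D` of `B` induces a front
on every exhaustive subtree `E ⊆ D` of a positive subtree of `B`: a maximal node of `E` is maximal
in `B`, so it lies above a point of `Y`, which belongs to `E` by downward closure. Since a front of
a tree is nonempty, this gives `∅ ∉ D_Y`; through the definition of `≤*` it moves a witness
`B' ∩ Y ⊆ Z` from `B₁` to any `B₃ ≥_x B₁`, and directedness of `≤_x` gives closure under `∩`.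
-/

section Trees

variable [PartialOrder α] {M B B' B₁ B₂ P D E Y Y' : Set α}

def DownClosedIn (B P : Set α) : Prop :=
  ∀ ⦃η⦄, η ∈ B → ∀ ⦃ν⦄, ν ∈ P → η ≤ ν → η ∈ P

theorem IsRoot.unique {r r' : α} (h : IsRoot B r) (h' : IsRoot B r') : r = r' :=
  le_antisymm (h.2 _ h'.1) (h'.2 _ h.1)

theorem IsChain.exists_isLeast_of_finite {S : Set α} (hc : IsChain (· ≤ ·) S) (hfin : S.Finite)
    (hne : S.Nonempty) : ∃ m, IsLeast S m := by
  obtain ⟨m, hm⟩ := hfin.exists_minimal hne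
  exact ⟨m, hm.prop, fun z hz => (hc.total hm.prop hz).elim id (hm.le_of_le hz)⟩

theorem IsChain.exists_isGreatest_of_finite {S : Set α} (hc : IsChain (· ≤ ·) S)
    (hfin : S.Finite) (hne : S.Nonempty) : ∃ m, IsGreatest S m := by
  obtain ⟨m, hm⟩ := hfin.exists_maximal hne
  exact ⟨m, hm.prop, fun z hz => (hc.total hz hm.prop).elim id (hm.le_of_ge hz)⟩

theorem succIn_of_subset (hsub : B' ⊆ B) {ν ρ : α} (hρ : ρ ∈ succIn B ν) (hρ' : ρ ∈ B') :
    ρ ∈ succIn B' ν :=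
  ⟨hρ', hρ.2.1, fun ⟨σ, hσ, h⟩ => hρ.2.2 ⟨σ, hsub hσ, h⟩⟩

theorem succIn_eq_inter_of_downClosedIn (hEP : E ⊆ P) (hdc : DownClosedIn P E) (ν : α) :
    succIn E ν = succIn P ν ∩ E := by
  ext ρ
  refine ⟨fun hρ => ⟨⟨hEP hρ.1, hρ.2.1, ?_⟩, hρ.1⟩, fun hρ => succIn_of_subset hEP hρ.1 hρ.2⟩
  rintro ⟨σ, hσ, hνσ, hσρ⟩
  exact hρ.2.2 ⟨σ, hdc hσ hρ.1 hσρ.le, hνσ, hσρ⟩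

theorem DownClosedIn.trans (hP : DownClosedIn B P) (hE : DownClosedIn P E) (hEP : E ⊆ P) :
    DownClosedIn B E :=
  fun _ hη _ hν hle => hE (hP hη (hEP hν) hle) hν hle

namespace CWT

theorem exists_root (hB : CWT M B) : ∃ r, IsRoot B r := hB.2.2.1

theorem le_total_of_le (hB : CWT M B) {ν η ρ : α} (hν : ν ∈ B) (hη : η ∈ B) (hρ : ρ ∈ B)
    (hην : η ≤ ν) (hρν : ρ ≤ ν) : η ≤ ρ ∨ ρ ≤ η :=
  hB.2.2.2.1 ν hν η hη ρ hρ hην hρν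

theorem succIn_eq_empty_or_infinite (hB : CWT M B) {ν : α} (hν : ν ∈ B) :
    succIn B ν = ∅ ∨ (succIn B ν).Infinite :=
  hB.2.2.2.2.2.1 ν hν

theorem exists_le_mem_maxIn (hB : CWT M B) {ν : α} (hν : ν ∈ B) : ∃ ν' ∈ maxIn B, ν ≤ ν' := by
  obtain ⟨m, hνm, hm⟩ := zorn_le_nonempty₀ B (fun c hcB hc _ hy => by
    obtain ⟨m, hm⟩ := hc.exists_isGreatest_of_finite (hB.2.2.2.2.1 c hcB hc) ⟨_, hy⟩
    exact ⟨m, hcB hm.1, hm.2⟩) ν hν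
  exact ⟨m, ⟨hm.prop, fun ρ hρ hlt => hlt.not_ge (hm.le_of_ge hρ hlt.le)⟩, hνm⟩

theorem isChain_of_le (hB : CWT M B) {σ : α} (hσ : σ ∈ B) {S : Set α} (hSB : S ⊆ B)
    (hSσ : ∀ ρ ∈ S, ρ ≤ σ) : IsChain (· ≤ ·) S :=
  fun _ ha _ hb _ => hB.le_total_of_le hσ (hSB ha) (hSB hb) (hSσ _ ha) (hSσ _ hb)

theorem exists_isLeast (hB : CWT M B) {σ : α} (hσ : σ ∈ B) {S : Set α} (hSB : S ⊆ B)
    (hSσ : ∀ ρ ∈ S, ρ ≤ σ) (hne : S.Nonempty) : ∃ m, IsLeast S m :=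
  have hc := hB.isChain_of_le hσ hSB hSσ
  hc.exists_isLeast_of_finite (hB.2.2.2.2.1 S hSB hc) hne

theorem exists_isGreatest (hB : CWT M B) {σ : α} (hσ : σ ∈ B) {S : Set α} (hSB : S ⊆ B)
    (hSσ : ∀ ρ ∈ S, ρ ≤ σ) (hne : S.Nonempty) : ∃ m, IsGreatest S m :=
  have hc := hB.isChain_of_le hσ hSB hSσ
  hc.exists_isGreatest_of_finite (hB.2.2.2.2.1 S hSB hc) hne

theorem exists_succIn_le (hB : CWT M B) {ν ρ : α} (hρ : ρ ∈ B) (hνρ : ν < ρ) :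
    ∃ σ ∈ succIn B ν, σ ≤ ρ := by
  obtain ⟨m, ⟨hmB, hνm, hmρ⟩, hmin⟩ :=
    hB.exists_isLeast hρ (S := {σ ∈ B | ν < σ ∧ σ ≤ ρ}) (fun _ h => h.1) (fun _ h => h.2.2)
      ⟨ρ, hρ, hνρ, le_rfl⟩
  refine ⟨m, ⟨hmB, hνm, ?_⟩, hmρ⟩
  rintro ⟨σ, hσ, hνσ, hσm⟩
  exact hσm.not_ge (hmin ⟨hσ, hνσ, hσm.le.trans hmρ⟩)

theorem exists_mem_succIn (hB : CWT M B) {ρ σ : α} (hρ : ρ ∈ B) (hσ : σ ∈ B) (hρσ : ρ < σ) :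
    ∃ τ ∈ B, ρ ≤ τ ∧ σ ∈ succIn B τ := by
  obtain ⟨m, ⟨hmB, hρm, hmσ⟩, hmax⟩ :=
    hB.exists_isGreatest hσ (S := {τ ∈ B | ρ ≤ τ ∧ τ < σ}) (fun _ h => h.1) (fun _ h => h.2.2.le)
      ⟨ρ, hρ, le_rfl, hρσ⟩
  refine ⟨m, hmB, hρm, hσ, hmσ, ?_⟩
  rintro ⟨τ, hτ, hmτ, hτσ⟩
  exact hmτ.not_ge (hmax ⟨hτ, hρm.trans hmτ.le, hτσ⟩)

theorem succIn_infinite_of_notMem_maxIn (hB : CWT M B) {ν : α} (hν : ν ∈ B)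
    (hmax : ν ∉ maxIn B) : (succIn B ν).Infinite := by
  obtain ⟨ρ, hρ, hνρ⟩ : ∃ ρ ∈ B, ν < ρ := by
    simpa [maxIn, hν] using hmax
  obtain ⟨σ, hσ, -⟩ := hB.exists_succIn_le hρ hνρ
  exact (hB.succIn_eq_empty_or_infinite hν).resolve_left (nonempty_of_mem hσ).ne_empty

theorem downClosedIn_of_succIn_subset (hB : CWT M B) (hB' : CWT M B') (hsub : B' ⊆ B) {r : α}
    (hrB : IsRoot B r) (hrB' : IsRoot B' r) (hsucc : ∀ τ ∈ B', succIn B' τ ⊆ succIn B τ) :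
    DownClosedIn B B' := by
  intro η hη ν hν hην
  obtain ⟨σ, ⟨hσ, hησ, hσν⟩, hmin⟩ :=
    hB.exists_isLeast (hsub hν) (S := {ρ ∈ B' | η ≤ ρ ∧ ρ ≤ ν}) (fun _ h => hsub h.1)
      (fun _ h => h.2.2) ⟨ν, hν, hην, le_rfl⟩
  rcases hησ.eq_or_lt with rfl | hησ
  · exact hσ
  -- the predecessor `τ` of `σ` in `B'` is also its predecessor in `B`, so `τ = η`
  obtain ⟨τ, hτ, -, hστ⟩ := hB'.exists_mem_succIn hrB'.1 hσ ((hrB.2 η hη).trans_lt hησ)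
  have hστB := hsucc τ hτ hστ
  rcases hB.le_total_of_le (hsub hσ) hη (hsub hτ) hησ.le hστ.2.1.le with hητ | hτη
  · exact absurd (hmin ⟨hτ, hητ, hστ.2.1.le.trans hσν⟩) hστ.2.1.not_ge
  · rcases hτη.eq_or_lt with rfl | hτη
    · exact hτ
    · exact absurd ⟨η, hη, hτη, hησ⟩ hστB.2.2

end CWT

theorem sb_of_downClosedIn (hP : CWT M P) (hEP : E ⊆ P) {r : α} (hr : IsRoot P r) (hrE : r ∈ E)
    (hdc : DownClosedIn P E) (hfin : ∀ ν ∈ E, (succIn P ν \ E).Finite) : sb M P E := by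
  obtain ⟨hPM, hcount, -, htree, hchain, -, hincompat, hsplit⟩ := id hP
  have hsucc := succIn_eq_inter_of_downClosedIn hEP hdc
  have hcwt : CWT M E := by
    refine ⟨hEP.trans hPM, hcount.mono hEP, ⟨r, hrE, fun x hx => hr.2 x (hEP hx)⟩,
      fun ν hν η hη ρ hρ => htree ν (hEP hν) η (hEP hη) ρ (hEP hρ),
      fun C hC => hchain C (hC.trans hEP), fun ν hν => ?_,
      fun η hη ν hν => hincompat η (hEP hη) ν (hEP hν), fun ν hν F hF => ?_⟩
    · rw [hsucc]
      rcases hP.succIn_eq_empty_or_infinite (hEP hν) with h | h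
      · exact Or.inl (by rw [h, empty_inter])
      · refine Or.inr ((h.sdiff (hfin ν hν)).mono fun ρ hρ => ⟨hρ.1, ?_⟩)
        exact not_not.mp fun hρE => hρ.2 ⟨hρ.1, hρE⟩
    · obtain ⟨ρ, hρ, hνρ⟩ : ∃ ρ ∈ E, ν < ρ := by
        simpa [maxIn, hν.1] using hν.2
      have hνP : ν ∈ P \ maxIn P := ⟨hEP hν.1, fun h => h.2 ρ (hEP hρ) hνρ⟩
      refine ((hsplit ν hνP F hF).sdiff (hfin ν hν.1)).mono ?_
      rintro ϱ ⟨⟨hϱ, hϱF⟩, hϱE⟩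
      exact ⟨hsucc ν ▸ ⟨hϱ, not_not.mp fun h => hϱE ⟨hϱ, h⟩⟩, hϱF⟩
  refine ⟨hcwt, hEP, ⟨r, hr, hrE, fun x hx => hr.2 x (hEP hx)⟩, fun ν hν => ?_⟩
  rw [hsucc, sdiff_self_inter]
  exact ⟨inter_subset_left, hfin ν hν⟩

theorem sb_refl (hB : CWT M B) : sb M B B := by
  obtain ⟨r, hr⟩ := hB.exists_root
  exact ⟨hB, subset_rfl, ⟨r, hr, hr⟩, fun _ _ => ⟨subset_rfl, by simp⟩⟩

theorem sb.downClosedIn (hB : CWT M B) (h : sb M B B') : DownClosedIn B B' := by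
  obtain ⟨r, hrB, hrB'⟩ := h.2.2.1
  exact hB.downClosedIn_of_succIn_subset h.1 h.2.1 hrB hrB' fun τ hτ => (h.2.2.2 τ hτ).1

theorem sb.trans (h₁ : sb M B B₁) (h₂ : sb M B₁ B₂) : sb M B B₂ := by
  obtain ⟨r, hrB, hrB₁⟩ := h₁.2.2.1
  obtain ⟨r', hr'B₁, hr'B₂⟩ := h₂.2.2.1
  refine ⟨h₂.1, h₂.2.1.trans h₁.2.1, ⟨r, hrB, hrB₁.unique hr'B₁ ▸ hr'B₂⟩, fun ν hν => ?_⟩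
  obtain ⟨hsub₁, hfin₁⟩ := h₁.2.2.2 ν (h₂.2.1 hν)
  obtain ⟨hsub₂, hfin₂⟩ := h₂.2.2.2 ν hν
  refine ⟨hsub₂.trans hsub₁, (hfin₁.union hfin₂).subset fun ρ hρ => ?_⟩
  by_cases hρ₁ : ρ ∈ succIn B₁ ν
  · exact Or.inr ⟨hρ₁, hρ.2⟩
  · exact Or.inl ⟨hρ.1, hρ₁⟩

theorem sb.inter_of_downClosedIn (hB : CWT M B) (h : sb M B B') (hP : CWT M P) (hPB : P ⊆ B)
    (hdc : DownClosedIn B P) : sb M P (P ∩ B') := by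
  obtain ⟨r, hrB, hrB'⟩ := h.2.2.1
  obtain ⟨ρ, hρ⟩ := hP.exists_root
  have hrP : r ∈ P := hdc hrB.1 hρ.1 (hrB.2 ρ (hPB hρ.1))
  refine sb_of_downClosedIn hP inter_subset_left ⟨hrP, fun x hx => hrB.2 x (hPB hx)⟩
    ⟨hrP, hrB'.1⟩ (fun η hη ν hν hην => ⟨hη, h.downClosedIn hB (hPB hη) hν.2 hην⟩)
    fun ν hν => (h.2.2.2 ν hν.2).2.subset fun σ hσ => ?_
  obtain ⟨hσB, hσP⟩ : σ ∈ succIn B ν ∩ P := succIn_eq_inter_of_downClosedIn hPB hdc ν ▸ hσ.1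
  exact ⟨hσB, fun hσB' => hσ.2 ⟨hσP, hσB'.1⟩⟩

theorem sb.inter (hB : CWT M B) (h₁ : sb M B B₁) (h₂ : sb M B B₂) : sb M B (B₁ ∩ B₂) :=
  h₁.trans (h₂.inter_of_downClosedIn hB h₁.1 h₁.2.1 (h₁.downClosedIn hB))

theorem sb.succIn_finite_of_mem_maxIn (h : sb M P E) {ν : α} (hν : ν ∈ maxIn E) :
    (succIn P ν).Finite := by
  have hempty : succIn E ν = ∅ := eq_empty_of_forall_notMem fun ρ hρ => hν.2 ρ hρ.1 hρ.2.1
  simpa [hempty] using (h.2.2.2 ν hν.1).2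

theorem CWT.psb_self (hB : CWT M B) : psb M B B := by
  obtain ⟨r, hr⟩ := hB.exists_root
  exact ⟨hB, subset_rfl, ⟨r, hr, hr⟩,
    fun ν hν => ⟨hB.succIn_infinite_of_notMem_maxIn hν.1 hν.2, subset_rfl⟩⟩

theorem psb.downClosedIn (hB : CWT M B) (h : psb M B P) : DownClosedIn B P := by
  obtain ⟨r, hrB, hrP⟩ := h.2.2.1
  refine hB.downClosedIn_of_succIn_subset h.1 h.2.1 hrB hrP fun τ hτ => ?_
  by_cases hmax : τ ∈ maxIn B
  · exact fun ρ hρ => absurd hρ.2.1 (hmax.2 ρ (h.2.1 hρ.1))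
  · exact (h.2.2.2 τ ⟨hτ, hmax⟩).2

theorem psb.mem_maxIn_of_succIn_finite (h : psb M B P) {ν : α} (hν : ν ∈ P)
    (hfin : (succIn P ν).Finite) : ν ∈ maxIn B := by
  by_contra hmax
  exact (h.2.2.2 ν ⟨hν, hmax⟩).1 hfin

theorem IsFront.inter_of_sb (hB : CWT M B) (hD : sb M B D) (hfront : IsFront D (Y ∩ D))
    (hP : psb M B P) (hE : sb M P E) (hED : E ⊆ D) : IsFront E (Y ∩ E) := by
  refine ⟨inter_subset_right,
    fun η hη ν hν => hfront.2.1 η ⟨hη.1, hED hη.2⟩ ν ⟨hν.1, hED hν.2⟩, fun ν hν => ?_⟩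
  -- a maximal node of `E` above `ν` has finitely many successors in `P`, so it is maximal in `B`
  obtain ⟨ν', hν', hνν'⟩ := hE.1.exists_le_mem_maxIn hν
  have hν'B : ν' ∈ maxIn B :=
    hP.mem_maxIn_of_succIn_finite (hE.2.1 hν'.1) (hE.succIn_finite_of_mem_maxIn hν')
  obtain ⟨η, ⟨hηY, hηD⟩, hcmp⟩ := hfront.2.2 ν' (hED hν'.1)
  have hηB : η ∈ B := hD.2.1 hηD
  have hην' : η ≤ ν' :=
    hcmp.elim id fun h => (h.eq_of_not_lt (hν'B.2 η hηB)).ge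
  have hηE : η ∈ E :=
    (hP.downClosedIn hB).trans (hE.downClosedIn hP.1) hE.2.1 hηB hν'.1 hην'
  exact ⟨η, ⟨hηY, hηE⟩,
    hB.le_total_of_le hν'B.1 hηB (hP.2.1 (hE.2.1 hν)) hην' hνν'⟩

theorem IsFront.inter_eq_of_isAntichain (h : IsFront E (Y' ∩ E)) (hY : IsAntichain (· ≤ ·) Y)
    (hY' : Y' ⊆ Y) : Y ∩ E = Y' ∩ E := by
  refine Subset.antisymm (fun y hy => ⟨?_, hy.2⟩) (inter_subset_inter_left E hY')
  obtain ⟨η, hη, hηy⟩ := h.2.2 y hy.2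
  have hηy : η = y := hηy.elim (hY.eq (hY' hη.1) hy.1) fun h => (hY.eq hy.1 (hY' hη.1) h).symm
  exact hηy ▸ hη.1

theorem IsAlmostFront.isAntichain (h : IsAlmostFront M B Y) :
    IsAntichain (· ≤ ·) Y :=
  h.2.1

theorem IsAlmostFront.inter_nonempty (hB : CWT M B) (hY : IsAlmostFront M B Y)
    (hB' : sb M B B') : (B' ∩ Y).Nonempty := by
  obtain ⟨D, hD, hfront⟩ := hY.2.2
  have hE : sb M B (B' ∩ D) := hB'.inter hB hD
  obtain ⟨r, hr⟩ := hE.1.exists_root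
  obtain ⟨η, ⟨hηY, hηB', -⟩, -⟩ :=
    (hfront.inter_of_sb hB hD hB.psb_self hE inter_subset_right).2.2 r hr.1
  exact ⟨η, hηB', hηY⟩

theorem IsAlmostFront.exists_sb_of_leStar {B₃ : Set α} (hY : IsAlmostFront M B₁ Y)
    (hB₁' : sb M B₁ B') (h : leStar M B₁ B₃) :
    ∃ E, sb M B₃ E ∧ IsAlmostFront M B₃ Y ∧ E ∩ Y ⊆ B' := by
  obtain ⟨hB₁, -, -, C, -, hP, hlift⟩ := h
  obtain ⟨D, hD, hfront⟩ := hY.2.2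
  set E₁ := C ∩ B₁ ∩ (B' ∩ D)
  have hE₁ : sb M (C ∩ B₁) E₁ :=
    (hB₁'.inter hB₁ hD).inter_of_downClosedIn hB₁ hP.1 hP.2.1 (hP.downClosedIn hB₁)
  have hfront₁ : IsFront E₁ ((Y ∩ E₁) ∩ E₁) := by
    rw [inter_assoc, inter_self]
    exact hfront.inter_of_sb hB₁ hD hP hE₁ fun _ h => h.2.2
  -- `Y ∩ E₁` is an almost front of the positive subtree `C ∩ B₁`, hence, by `≤*`, of `B₃`
  obtain ⟨E, hE, hfrontE⟩ :=
    (hlift _ ⟨fun _ h => hY.1 h.1, hY.isAntichain.subset inter_subset_left, E₁, hE₁, hfront₁⟩).2.2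
  have hYE : Y ∩ E = (Y ∩ E₁) ∩ E :=
    hfrontE.inter_eq_of_isAntichain hY.isAntichain inter_subset_left
  exact ⟨E, hE, ⟨hY.1, hY.2.1, E, hE, hYE ▸ hfrontE⟩,
    fun y hy => (hYE.subset ⟨hy.2, hy.1⟩).1.2.2.1⟩

end Trees

theorem KSys.cwt_of_mem_Bf [PartialOrder α] (x : KSys α) {B : Set α} (hB : B ∈ x.Bf) :
    CWT x.M B :=
  x.A_cwt x.rt x.rt_mem B hB.1

/-- for `x ∈ 𝐊` and `Y` an almost front of some `B ∈ ℬ_x`, the family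
`D^x_Y` is a proper filter on `Y`. -/
theorem D_isProperFilter [PartialOrder α] (x : KSys α) (B Y : Set α)
    (hB : B ∈ x.Bf) (hY : IsAlmostFront x.M B Y) :
    Y ∈ x.D Y ∧ ∅ ∉ x.D Y ∧
    (∀ Z₁ ∈ x.D Y, ∀ Z₂ ∈ x.D Y, Z₁ ∩ Z₂ ∈ x.D Y) ∧
    (∀ Z₁ ∈ x.D Y, ∀ Z₂, Z₁ ⊆ Z₂ → Z₂ ⊆ Y → Z₂ ∈ x.D Y) := by
  simp only [KSys.D, mem_ofPred_eq]
  refine ⟨⟨subset_rfl, B, hB, B, sb_refl (x.cwt_of_mem_Bf hB), hY, inter_subset_right⟩, ?_, ?_, ?_⟩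
  · rintro ⟨-, B₀, hB₀, B', hB', hY₀, hempty⟩
    obtain ⟨y, hy⟩ := hY₀.inter_nonempty (x.cwt_of_mem_Bf hB₀) hB'
    exact hempty hy
  · rintro Z₁ ⟨hZ₁, B₁, hB₁, B₁', hB₁', hY₁, hZ₁'⟩ Z₂ ⟨-, B₂, hB₂, B₂', hB₂', hY₂, hZ₂'⟩
    obtain ⟨B₃, hB₃, h₁₃, h₂₃⟩ := x.lex_directed B₁ hB₁ B₂ hB₂
    obtain ⟨E₁, hE₁, hY₃, hE₁B₁'⟩ := hY₁.exists_sb_of_leStar hB₁' (x.lex_leStar _ _ h₁₃)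
    obtain ⟨E₂, hE₂, -, hE₂B₂'⟩ := hY₂.exists_sb_of_leStar hB₂' (x.lex_leStar _ _ h₂₃)
    refine ⟨inter_subset_left.trans hZ₁, B₃, hB₃, E₁ ∩ E₂,
      hE₁.inter (x.cwt_of_mem_Bf hB₃) hE₂, hY₃, ?_⟩
    rintro y ⟨⟨hy₁, hy₂⟩, hy⟩
    exact ⟨hZ₁' ⟨hE₁B₁' ⟨hy₁, hy⟩, hy⟩, hZ₂' ⟨hE₂B₂' ⟨hy₂, hy⟩, hy⟩⟩
  · rintro Z₁ ⟨-, B₁, hB₁, B₁', hB₁', hY₁, hZ₁'⟩ Z₂ h₁₂ hZ₂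
    exact ⟨hZ₂, B₁, hB₁, B₁', hB₁', hY₁, hZ₁'.trans h₁₂⟩
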